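/- For ε > 0 let G_ε = {z ∈ ℂ : |z + ε| > ε}. Then for every real η > 0, the Carathéodory metric of G_ε at the point η in the unit direction is γ_{G_ε}(η;1) = 1/(η(2 + η/ε)). -/

import Mathlib

open Complex Metric Set MeasureTheory Filter Bornology Module
open scoped Real Topology

noncomputable section

/-- Lebesgue measure on `ℂⁿ`. -/
noncomputable instance euclideanComplexMeasurableSpace {n : ℕ} :
    MeasurableSpace (EuclideanSpace ℂ (Fin n)) := borel _

instance euclideanComplexBorel {n : ℕ} :
    BorelSpace (EuclideanSpace ℂ (Fin n)) := ⟨rfl⟩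

noncomputable instance euclideanComplexMeasureSpace {n : ℕ} :
    MeasureSpace (EuclideanSpace ℂ (Fin n)) :=
  letI : InnerProductSpace ℝ (EuclideanSpace ℂ (Fin n)) := InnerProductSpace.complexToReal
  measureSpaceOfInnerProductSpace

variable {E : Type*} [NormedAddCommGroup E] [NormedSpace ℂ E]

/-- The Kobayashi infinitesimal (pseudo)metric of `Ω` at `z` in direction `X`. -/
def kob (Ω : Set E) (z X : E) : ℝ :=
  sInf {r : ℝ | ∃ t : ℂ, r = ‖t‖ ∧ ∃ φ : ℂ → E,
    DifferentiableOn ℂ φ (ball (0 : ℂ) 1) ∧ MapsTo φ (ball (0 : ℂ) 1) Ω ∧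
    φ 0 = z ∧ t • deriv φ 0 = X}

/-- The Carathéodory infinitesimal (pseudo)metric of `Ω` at `z` in direction `X`. -/
def cara (Ω : Set E) (z X : E) : ℝ :=
  sSup {r : ℝ | ∃ f : E → ℂ, DifferentiableOn ℂ f Ω ∧
    MapsTo f Ω (ball (0 : ℂ) 1) ∧ r = ‖fderiv ℂ f z X‖}

/-- The square root of the Bergman kernel of `Ω` on the diagonal. -/
def bker (Ω : Set E) [MeasureSpace E] (z : E) : ℝ :=
  sSup {r : ℝ | ∃ f : E → ℂ, DifferentiableOn ℂ f Ω ∧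
    (∫ w in Ω, ‖f w‖ ^ 2) ≤ 1 ∧ r = ‖f z‖}

/-- `m_Ω(z;X)`, the numerator in the definition of the Bergman metric. -/
def bm (Ω : Set E) [MeasureSpace E] (z X : E) : ℝ :=
  sSup {r : ℝ | ∃ f : E → ℂ, DifferentiableOn ℂ f Ω ∧
    (∫ w in Ω, ‖f w‖ ^ 2) = 1 ∧ f z = 0 ∧ r = ‖fderiv ℂ f z X‖}

/-- The Bergman metric `β_Ω(z;X) = m_Ω(z;X)/k_Ω(z)`. -/
def bmet (Ω : Set E) [MeasureSpace E] (z X : E) : ℝ := bm Ω z X / bker Ω z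

/-- `∂ρ(q)(X) = Σ_j ∂ρ/∂z_j(q) X_j` for a real-valued function `ρ`. -/
def cDer (ρ : E → ℝ) (q X : E) : ℂ :=
  (fderiv ℝ ρ q X : ℂ) / 2 - Complex.I * (fderiv ℝ ρ q (Complex.I • X) : ℂ) / 2

/-- The complex tangent space at `q` of the level set of `ρ`, as a set:
`{X : Σ_j ∂ρ/∂z_j(q) X_j = 0}`. -/
def cTan (ρ : E → ℝ) (q : E) : Set E := {X | cDer ρ q X = 0}

/-- The real Hessian of `ρ` at `q`, applied to `X, Y`. -/
def hess (ρ : E → ℝ) (q X Y : E) : ℝ :=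
  fderiv ℝ (fun w => fderiv ℝ ρ w Y) q X

/-- The Levi (Hermitian) form `Σ_{j,k} ∂²ρ/∂z_j∂z̄_k(q) X_j conj (Y_k)`,
expressed through the real Hessian of `ρ`. -/
def levi (ρ : E → ℝ) (q X Y : E) : ℂ :=
  (((hess ρ q X Y + hess ρ q (Complex.I • X) (Complex.I • Y) : ℝ) : ℂ) +
    Complex.I * ((hess ρ q X (Complex.I • Y) - hess ρ q (Complex.I • X) Y : ℝ) : ℂ)) / 4

/-- The rank of the Levi form at `q`: the dimension of the complex tangent space
minus the dimension of the kernel of the Levi form restricted to it. -/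
def leviRank (ρ : E → ℝ) (q : E) : ℕ :=
  finrank ℂ (Submodule.span ℂ (cTan ρ q)) -
    finrank ℂ (Submodule.span ℂ
      {X | X ∈ cTan ρ q ∧ ∀ Y ∈ cTan ρ q, levi ρ q X Y = 0})

/-- `ρ` is a local `C²` defining function for `Ω` near `p`, on the open set `U`. -/
def IsDefining2 (Ω : Set E) (p : E) (U : Set E) (ρ : E → ℝ) : Prop :=
  IsOpen U ∧ p ∈ U ∧ ContDiffOn ℝ 2 ρ U ∧ (∀ q ∈ U, fderiv ℝ ρ q ≠ 0) ∧
    Ω ∩ U = {z ∈ U | ρ z < 0}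

/-- `ρ` is a local `C^∞` defining function for `Ω` near `p`, on the open set `U`. -/
def IsDefiningSmooth (Ω : Set E) (p : E) (U : Set E) (ρ : E → ℝ) : Prop :=
  IsOpen U ∧ p ∈ U ∧ ContDiffOn ℝ (⊤ : ℕ∞) ρ U ∧ (∀ q ∈ U, fderiv ℝ ρ q ≠ 0) ∧
    Ω ∩ U = {z ∈ U | ρ z < 0}

/-- `ρ` is a local `C^{1,1}` defining function for `Ω` near `p`:
`C¹` with Lipschitz, nonvanishing gradient. -/
def IsDefining11 (Ω : Set E) (p : E) (U : Set E) (ρ : E → ℝ) : Prop :=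
  IsOpen U ∧ p ∈ U ∧ ContDiffOn ℝ 1 ρ U ∧
    (∃ K : NNReal, LipschitzOnWith K (fun z => fderiv ℝ ρ z) U) ∧
    (∀ q ∈ U, fderiv ℝ ρ q ≠ 0) ∧ Ω ∩ U = {z ∈ U | ρ z < 0}

/-- The boundary of `Ω` is Levi flat on `U`, w.r.t. the defining function `ρ`:
the Levi form vanishes on the complex tangent space at every boundary point in `U`. -/
def LeviFlatOn (Ω : Set E) (U : Set E) (ρ : E → ℝ) : Prop :=
  ∀ q ∈ frontier Ω ∩ U, ∀ X ∈ cTan ρ q, levi ρ q X X = 0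

/-- `q` is a nearest boundary point to `z`. -/
def IsNearest (Ω : Set E) (z q : E) : Prop :=
  q ∈ frontier Ω ∧ dist z q = infDist z Ωᶜ

/-- `ν` is the inner unit normal to `∂Ω` at the boundary point `q`. -/
def IsInnerNormal (Ω : Set E) (q ν : E) : Prop :=
  ‖ν‖ = 1 ∧ ∃ t₀ > 0, ∀ t : ℝ, 0 < t → t < t₀ →
    q + t • ν ∈ Ω ∧ infDist (q + t • ν) Ωᶜ = t

/-- `u` is plurisubharmonic on `Ω`: upper semicontinuous and satisfying the
sub-mean value inequality along every complex line. -/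
def PSHOn (u : E → ℝ) (Ω : Set E) : Prop :=
  UpperSemicontinuousOn u Ω ∧
  ∀ a b : E, ∀ r : ℝ, 0 < r → (∀ t : ℂ, ‖t‖ ≤ r → a + t • b ∈ Ω) →
    u a ≤ (1 / (2 * π)) *
      ∫ θ in (0 : ℝ)..(2 * π), u (a + (((r : ℂ) * Complex.exp ((θ : ℂ) * Complex.I))) • b)

/-- `Ω` is pseudoconvex: `-log δ_Ω` is plurisubharmonic on `Ω`. -/
def Pseudoconvex (Ω : Set E) : Prop :=
  PSHOn (fun z => -Real.log (infDist z Ωᶜ)) Ω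

/-- A bounded domain: open, connected and bounded. -/
def IsBoundedDomain (Ω : Set E) : Prop :=
  IsOpen Ω ∧ IsConnected Ω ∧ IsBounded Ω

/-- The embedding `ℂ^k → ℂ^n` (`k ≤ n`) by zero in the last coordinates. -/
def emb {k n : ℕ} (z : EuclideanSpace ℂ (Fin k)) : EuclideanSpace ℂ (Fin n) :=
  WithLp.toLp 2 (fun j : Fin n => if hj : (j : ℕ) < k then z ⟨j, hj⟩ else 0)

/-- The "tangential part" `(0, z₂, …, z_n)` of `z ∈ ℂⁿ`. -/
def tailPart {n : ℕ} (z : EuclideanSpace ℂ (Fin n)) : EuclideanSpace ℂ (Fin n) :=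
  WithLp.toLp 2 (fun j : Fin n => if (j : ℕ) = 0 then 0 else z j)

end

section CaraProof

lemma mob_lt (b w : ℂ) (hb : ‖b‖ < 1) (hw : ‖w‖ < 1) :
    ‖w - b‖ < ‖1 - (starRingEnd ℂ) b * w‖ := by
  have key : normSq (1 - (starRingEnd ℂ) b * w) - normSq (w - b)
      = (1 - normSq b) * (1 - normSq w) := by
    simp only [normSq_apply, mul_re, mul_im, conj_re, conj_im, sub_re, sub_im, one_re, one_im]
    ring
  have hb' : normSq b < 1 := by rw [normSq_eq_norm_sq]; nlinarith [norm_nonneg b]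
  have hw' : normSq w < 1 := by rw [normSq_eq_norm_sq]; nlinarith [norm_nonneg w]
  have h1 : normSq (w - b) < normSq (1 - (starRingEnd ℂ) b * w) := by nlinarith
  rw [Complex.norm_def, Complex.norm_def]
  exact Real.sqrt_lt_sqrt (normSq_nonneg _) h1

lemma mob_ne (b w : ℂ) (hb : ‖b‖ < 1) (hw : ‖w‖ < 1) : 1 - (starRingEnd ℂ) b * w ≠ 0 := by
  intro h
  have : ‖(starRingEnd ℂ) b * w‖ < 1 := by
    rw [norm_mul, RCLike.norm_conj]
    nlinarith [norm_nonneg b, norm_nonneg w]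
  rw [sub_eq_zero] at h
  rw [← h] at this
  simp at this

lemma mob_mapsTo (b : ℂ) (hb : ‖b‖ < 1) :
    MapsTo (fun w => (w - b) / (1 - (starRingEnd ℂ) b * w)) (ball 0 1) (ball 0 1) := by
  intro w hw
  rw [mem_ball_zero_iff] at hw ⊢
  rw [norm_div, div_lt_one (norm_pos_iff.mpr (mob_ne b w hb hw))]
  exact mob_lt b w hb hw

lemma mob_hasDerivAt (b w : ℂ) (h : 1 - (starRingEnd ℂ) b * w ≠ 0) :
    HasDerivAt (fun w => (w - b) / (1 - (starRingEnd ℂ) b * w))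
      ((1 - (normSq b : ℂ)) / (1 - (starRingEnd ℂ) b * w) ^ 2) w := by
  have h1 : HasDerivAt (fun w : ℂ => w - b) 1 w := (hasDerivAt_id w).sub_const b
  have h2 : HasDerivAt (fun w : ℂ => 1 - (starRingEnd ℂ) b * w) (-((starRingEnd ℂ) b)) w := by
    simpa using ((hasDerivAt_id w).const_mul ((starRingEnd ℂ) b)).const_sub 1
  have := h1.div h2 h
  refine this.congr_deriv ?_
  have hcb : (starRingEnd ℂ) b * b = (normSq b : ℂ) := by
    rw [mul_comm, mul_conj]
  rw [← hcb]; ring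

lemma pick {H : ℂ → ℂ} (hd : DifferentiableOn ℂ H (ball 0 1))
    (hm : MapsTo H (ball 0 1) (ball 0 1)) {a : ℝ} (ha0 : 0 < a) (ha1 : a < 1) :
    ‖deriv H (a : ℂ)‖ ≤ 1 / (1 - a ^ 2) := by
  have hnorm_a : ‖(a : ℂ)‖ = a := by
    rw [Complex.norm_real, Real.norm_eq_abs, abs_of_pos ha0]
  have haball : (a : ℂ) ∈ ball (0 : ℂ) 1 := by rw [mem_ball_zero_iff, hnorm_a]; exact ha1
  set b := H (a : ℂ) with hbdef
  have hb : ‖b‖ < 1 := mem_ball_zero_iff.mp (hm haball)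
  have hna : ‖(-(a : ℂ))‖ < 1 := by rw [norm_neg, hnorm_a]; exact ha1
  set σ : ℂ → ℂ := fun w => (w - (-(a:ℂ))) / (1 - (starRingEnd ℂ) (-(a:ℂ)) * w) with hσdef
  set φ : ℂ → ℂ := fun w => (w - b) / (1 - (starRingEnd ℂ) b * w) with hφdef
  have hσ0 : σ 0 = (a : ℂ) := by simp [hσdef]
  have hσd : ∀ w ∈ ball (0:ℂ) 1, HasDerivAt σ
      ((1 - (normSq (-(a:ℂ)) : ℂ)) / (1 - (starRingEnd ℂ) (-(a:ℂ)) * w) ^ 2) w :=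
    fun w hw => mob_hasDerivAt _ w (mob_ne _ w hna (mem_ball_zero_iff.mp hw))
  have hφd : ∀ w ∈ ball (0:ℂ) 1, HasDerivAt φ
      ((1 - (normSq b : ℂ)) / (1 - (starRingEnd ℂ) b * w) ^ 2) w :=
    fun w hw => mob_hasDerivAt _ w (mob_ne _ w hb (mem_ball_zero_iff.mp hw))
  have hσdiff : DifferentiableOn ℂ σ (ball 0 1) :=
    fun w hw => ((hσd w hw).differentiableAt).differentiableWithinAt
  have hφdiff : DifferentiableOn ℂ φ (ball 0 1) :=
    fun w hw => ((hφd w hw).differentiableAt).differentiableWithinAt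
  have hσm : MapsTo σ (ball 0 1) (ball 0 1) := mob_mapsTo _ hna
  have hφm : MapsTo φ (ball 0 1) (ball 0 1) := mob_mapsTo _ hb
  set G : ℂ → ℂ := φ ∘ H ∘ σ with hGdef
  have hGd : DifferentiableOn ℂ G (ball 0 1) :=
    (hφdiff.comp (hd.comp hσdiff hσm) (hm.comp hσm))
  have hGm : MapsTo G (ball 0 1) (ball 0 1) := (hφm.comp (hm.comp hσm))
  have hG0 : G 0 = 0 := by
    simp only [hGdef, Function.comp_apply, hσ0, ← hbdef, hφdef]
    simp
  have hball0 : (0:ℂ) ∈ ball (0:ℂ) 1 := by simp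
  have hschwarz : ‖deriv G 0‖ ≤ 1 := by
    have := Complex.norm_deriv_le_one_of_mapsTo_ball hGd
      (by rw [hG0]; exact hGm.mono_right ball_subset_closedBall) one_pos
    simpa using this
  -- chain rule
  have hHat : DifferentiableAt ℂ H (a : ℂ) := hd.differentiableAt (isOpen_ball.mem_nhds haball)
  have hσat : DifferentiableAt ℂ σ 0 := (hσd 0 hball0).differentiableAt
  have hHσd : deriv (H ∘ σ) 0 = deriv H (a:ℂ) * deriv σ 0 := by
    rw [deriv_comp 0 (by rw [hσ0]; exact hHat) hσat, hσ0]
  have hGderiv : deriv G 0 = deriv φ b * (deriv H (a:ℂ) * deriv σ 0) := by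
    have : deriv G 0 = deriv φ ((H ∘ σ) 0) * deriv (H ∘ σ) 0 := by
      apply deriv_comp 0
      · rw [Function.comp_apply, hσ0, ← hbdef]
        exact (hφd b (hm haball)).differentiableAt
      · exact DifferentiableAt.comp 0 (hσ0 ▸ hHat) hσat
    rw [this, Function.comp_apply, hσ0, ← hbdef, hHσd]
  have hdσ0 : deriv σ 0 = ((1 - a^2 : ℝ) : ℂ) := by
    rw [(hσd 0 hball0).deriv]
    push_cast
    simp [normSq_ofReal]
    ring
  set s := normSq b with hsdef
  have hs0 : 0 ≤ s := normSq_nonneg b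
  have hs1 : s < 1 := by
    rw [hsdef, normSq_eq_norm_sq]
    nlinarith [norm_nonneg b]
  have h1s' : (0:ℝ) < 1 - s := by linarith
  have h1s : (1 : ℂ) - (s : ℂ) ≠ 0 := by
    intro h
    rw [sub_eq_zero] at h
    have : (s:ℝ) = 1 := by exact_mod_cast h.symm
    linarith
  have hcb : (starRingEnd ℂ) b * b = (s : ℂ) := by rw [mul_comm, mul_conj]
  have hdφb : deriv φ b = ((1:ℂ) - (s:ℂ))⁻¹ := by
    rw [(hφd b (hm haball)).deriv, hcb, pow_two, ← div_div, div_self h1s, one_div]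
  have ha2 : (0:ℝ) < 1 - a^2 := by nlinarith
  have hc1 : ((1:ℂ) - (s:ℂ)) = ((1 - s : ℝ) : ℂ) := by push_cast; ring
  have hnormG : ‖deriv G 0‖ = (1 - s)⁻¹ * (‖deriv H (a:ℂ)‖ * (1 - a^2)) := by
    rw [hGderiv, norm_mul, norm_mul, hdφb, hdσ0, hc1, norm_inv, Complex.norm_real,
      Complex.norm_real, Real.norm_eq_abs, Real.norm_eq_abs, abs_of_pos h1s',
      abs_of_pos ha2]
  rw [hnormG] at hschwarz
  rw [le_div_iff₀ ha2]
  calc ‖deriv H (a:ℂ)‖ * (1 - a^2) = (1 - s) * ((1-s)⁻¹ * (‖deriv H (a:ℂ)‖ * (1 - a^2))) := by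
        field_simp
    _ ≤ (1 - s) * 1 := by
        apply mul_le_mul_of_nonneg_left hschwarz (le_of_lt h1s')
    _ ≤ 1 := by linarith

lemma upper (ε η : ℝ) (hε : 0 < ε) (hη : 0 < η) {f : ℂ → ℂ}
    (hf : DifferentiableOn ℂ f {z : ℂ | ε < ‖z + (ε:ℂ)‖})
    (hmap : MapsTo f {z : ℂ | ε < ‖z + (ε:ℂ)‖} (ball 0 1)) :
    ‖deriv f (η:ℂ)‖ ≤ ε / (η * (η + 2*ε)) := by
  set Ω : Set ℂ := {z : ℂ | ε < ‖z + (ε:ℂ)‖} with hΩdef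
  have hΩo : IsOpen Ω := isOpen_lt continuous_const (by continuity)
  have hηε : (0:ℝ) < η + ε := by linarith
  have hηΩ : (η : ℂ) ∈ Ω := by
    show ε < ‖(η:ℂ) + (ε:ℂ)‖
    rw [show (η:ℂ) + (ε:ℂ) = ((η + ε : ℝ) : ℂ) by push_cast; ring, Complex.norm_real,
      Real.norm_eq_abs, abs_of_pos hηε]
    linarith
  set a : ℝ := ε / (η + ε) with hadef
  have ha0 : 0 < a := div_pos hε hηε
  have ha1 : a < 1 := by
    rw [hadef, div_lt_one hηε]; linarith
  have ha₀ne : (a : ℂ) ≠ 0 := by exact_mod_cast ha0.ne'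
  set ψ : ℂ → ℂ := fun w => (ε:ℂ)/w - (ε:ℂ) with hψdef
  set h : ℂ → ℂ := f ∘ ψ with hhdef
  have hψΩ : MapsTo ψ (ball (0:ℂ) 1 \ {0}) Ω := by
    rintro w ⟨hw1, hw2⟩
    rw [mem_ball_zero_iff] at hw1
    have hwne : w ≠ 0 := by simpa using hw2
    have hwpos : 0 < ‖w‖ := norm_pos_iff.mpr hwne
    show ε < ‖ψ w + (ε:ℂ)‖
    have : ψ w + (ε:ℂ) = (ε:ℂ)/w := by rw [hψdef]; ring
    rw [this, norm_div, Complex.norm_real, Real.norm_eq_abs, abs_of_pos hε]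
    rw [lt_div_iff₀ hwpos]
    nlinarith
  have hψd : ∀ w : ℂ, w ≠ 0 → HasDerivAt ψ ((ε:ℂ) * (-(w^2)⁻¹)) w := by
    intro w hw
    exact ((hasDerivAt_inv hw).const_mul (ε:ℂ)).sub_const _
  have hhd : DifferentiableOn ℂ h (ball (0:ℂ) 1 \ {0}) := by
    apply hf.comp _ hψΩ
    intro w hw
    exact ((hψd w (by simpa using hw.2)).differentiableAt).differentiableWithinAt
  have hbdd : BddAbove (norm ∘ h '' (ball (0:ℂ) 1 \ {0})) := by
    refine ⟨1, ?_⟩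
    rintro r ⟨w, hw, rfl⟩
    exact le_of_lt (mem_ball_zero_iff.mp (hmap (hψΩ hw)))
  set H : ℂ → ℂ := Function.update h 0 (limUnder (nhdsWithin 0 {(0:ℂ)}ᶜ) h) with hHdef
  have HD : DifferentiableOn ℂ H (ball (0:ℂ) 1) :=
    Complex.differentiableOn_update_limUnder_of_bddAbove (ball_mem_nhds 0 one_pos) hhd hbdd
  have hHeq : ∀ w : ℂ, w ≠ 0 → H w = h w := fun w hw => Function.update_of_ne hw _ _
  have hHlt : ∀ w ∈ ball (0:ℂ) 1, w ≠ 0 → ‖H w‖ < 1 := by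
    intro w hw hw0
    rw [hHeq w hw0]
    exact mem_ball_zero_iff.mp (hmap (hψΩ ⟨hw, by simpa using hw0⟩))
  have hball0 : (0:ℂ) ∈ ball (0:ℂ) 1 := by simp
  have hnorm_a : ‖(a : ℂ)‖ = a := by
    rw [Complex.norm_real, Real.norm_eq_abs, abs_of_pos ha0]
  have haball : (a : ℂ) ∈ ball (0 : ℂ) 1 := by rw [mem_ball_zero_iff, hnorm_a]; exact ha1
  have hH0 : ‖H 0‖ < 1 := by
    by_contra hcon
    push_neg at hcon
    have hmax0 : ∀ w ∈ ball (0:ℂ) 1, ‖H w‖ ≤ ‖H 0‖ := by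
      intro w hw
      by_cases hw0 : w = 0
      · subst hw0; exact le_rfl
      · exact le_trans (le_of_lt (hHlt w hw hw0)) hcon
    have hmax : IsMaxOn (norm ∘ H) (ball (0:ℂ) 1) 0 := fun w hw => hmax0 w hw
    have heq := Complex.norm_eqOn_of_isPreconnected_of_isMaxOn
      (convex_ball (0:ℂ) 1).isPreconnected isOpen_ball HD hball0 hmax haball
    have hlt := hHlt (a:ℂ) haball ha₀ne
    simp only [Function.comp_apply, Function.const_apply] at heq
    rw [heq] at hlt
    linarith
  have hHm : MapsTo H (ball (0:ℂ) 1) (ball (0:ℂ) 1) := by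
    intro w hw
    rw [mem_ball_zero_iff]
    by_cases hw0 : w = 0
    · subst hw0; exact hH0
    · exact hHlt w hw hw0
  have hpick := pick HD hHm ha0 ha1
  -- deriv H a = deriv h a
  have hEv : H =ᶠ[nhds (a:ℂ)] h := by
    filter_upwards [isOpen_compl_singleton.mem_nhds
      (show (a:ℂ) ∈ ({(0:ℂ)}ᶜ : Set ℂ) by simpa using ha₀ne)] with w hw
    exact Function.update_of_ne (by simpa using hw) _ _
  have hderivHh : deriv H (a:ℂ) = deriv h (a:ℂ) := hEv.deriv_eq
  -- deriv h a = deriv f η * deriv ψ a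
  have hεne : (ε:ℂ) ≠ 0 := by exact_mod_cast hε.ne'
  have hηεc : ((η:ℂ) + ε) ≠ 0 := by
    rw [show (η:ℂ) + (ε:ℂ) = ((η + ε : ℝ) : ℂ) by push_cast; ring]
    exact_mod_cast hηε.ne'
  have h5 : (ε:ℂ)/(a:ℂ) = (η:ℂ) + (ε:ℂ) := by
    rw [hadef]
    push_cast
    field_simp
  have hψa : ψ (a:ℂ) = (η:ℂ) := by
    show (ε:ℂ)/(a:ℂ) - (ε:ℂ) = (η:ℂ)
    rw [h5]; ring
  have hfat : DifferentiableAt ℂ f (ψ (a:ℂ)) := by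
    rw [hψa]; exact hf.differentiableAt (hΩo.mem_nhds hηΩ)
  have hψat := (hψd (a:ℂ) ha₀ne)
  have hderivh : deriv h (a:ℂ) = deriv f (η:ℂ) * ((ε:ℂ) * (-(((a:ℂ))^2)⁻¹)) := by
    rw [hhdef, deriv_comp _ hfat hψat.differentiableAt, hψa, hψat.deriv]
  have hnormψ : ‖(ε:ℂ) * (-(((a:ℂ))^2)⁻¹)‖ = ε / a^2 := by
    rw [norm_mul, norm_neg, norm_inv, norm_pow, hnorm_a, Complex.norm_real,
      Real.norm_eq_abs, abs_of_pos hε, div_eq_mul_inv]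
  have hkey : ‖deriv f (η:ℂ)‖ * (ε / a^2) ≤ 1 / (1 - a^2) := by
    rw [← hnormψ, ← norm_mul, ← hderivh, ← hderivHh]
    exact hpick
  -- conclude by algebra
  have ha2 : (0:ℝ) < 1 - a^2 := by nlinarith
  have hx := (le_div_iff₀ (show (0:ℝ) < ε/a^2 by positivity)).mpr hkey
  have hval : (1/(1-a^2))/(ε/a^2) = ε/(η*(η+2*ε)) := by
    have h1 : η + ε ≠ 0 := hηε.ne'
    have hA : (η+ε)^2 - ε^2 ≠ 0 := ne_of_gt (by nlinarith)
    rw [div_eq_div_iff (ne_of_gt (show (0:ℝ) < ε/a^2 by positivity))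
      (ne_of_gt (show (0:ℝ) < η*(η+2*ε) by positivity)), hadef]
    field_simp [hA]
    ring
  rw [hval] at hx
  exact hx

lemma norm_lt_of_normSq_lt {x y : ℂ} (h : normSq x < normSq y) : ‖x‖ < ‖y‖ := by
  rw [Complex.norm_def, Complex.norm_def]
  exact Real.sqrt_lt_sqrt (normSq_nonneg _) h

lemma extremal (ε η : ℝ) (hε : 0 < ε) (hη : 0 < η) :
    ∃ f : ℂ → ℂ, DifferentiableOn ℂ f {z : ℂ | ε < ‖z + (ε:ℂ)‖} ∧
      MapsTo f {z : ℂ | ε < ‖z + (ε:ℂ)‖} (ball 0 1) ∧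
      ‖deriv f (η:ℂ)‖ = ε / (η * (η + 2*ε)) := by
  have hηε : (0:ℝ) < η + ε := by linarith
  set a : ℝ := ε / (η + ε) with hadef
  have ha0 : 0 < a := div_pos hε hηε
  have ha1 : a < 1 := by rw [hadef, div_lt_one hηε]; linarith
  set c : ℝ := a * η with hcdef
  have hc0 : 0 < c := mul_pos ha0 hη
  have hcε : c = ε * (1 - a) := by
    rw [hcdef, hadef]; field_simp; ring
  have hclt : c < ε := by
    rw [hcε]; nlinarith
  set f : ℂ → ℂ := fun z => ((c:ℂ) - (a:ℂ) * z) / (z + (c:ℂ)) with hfdef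
  have hden : ∀ z : ℂ, ε < ‖z + (ε:ℂ)‖ → z + (c:ℂ) ≠ 0 := by
    intro z hz h0
    have hzc : z = -(c:ℂ) := by linear_combination h0
    rw [hzc, show -(c:ℂ) + (ε:ℂ) = ((ε - c : ℝ) : ℂ) by push_cast; ring,
      Complex.norm_real, Real.norm_eq_abs, abs_of_pos (by linarith)] at hz
    linarith
  refine ⟨f, ?_, ?_, ?_⟩
  · intro z hz
    apply DifferentiableWithinAt.div
    · exact (differentiableWithinAt_const _).sub
        (differentiableWithinAt_id.const_mul _)
    · exact differentiableWithinAt_id.add (differentiableWithinAt_const _)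
    · exact hden z hz
  · intro z hz
    have hz' : ε < ‖z + (ε:ℂ)‖ := hz
    rw [mem_ball_zero_iff, hfdef]
    simp only
    rw [norm_div, div_lt_one (norm_pos_iff.mpr (hden z hz'))]
    apply norm_lt_of_normSq_lt
    have hsq : ε^2 < normSq (z + (ε:ℂ)) := by
      have h1 : normSq (z + (ε:ℂ)) = ‖z + (ε:ℂ)‖^2 := by
        rw [normSq_eq_norm_sq]
      rw [h1]
      nlinarith [norm_nonneg (z + (ε:ℂ))]
    have hkey : normSq (z + (c:ℂ)) - normSq ((c:ℂ) - (a:ℂ) * z)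
        = (1 - a^2) * (normSq (z + (ε:ℂ)) - ε^2) := by
      rw [show ((c:ℝ):ℂ) = ((ε * (1-a) : ℝ):ℂ) by rw [hcε]]
      simp only [normSq_apply, add_re, add_im, sub_re, sub_im, mul_re, mul_im,
        Complex.ofReal_re, Complex.ofReal_im]
      ring
    have ha2 : (0:ℝ) < 1 - a^2 := by nlinarith
    nlinarith [hkey, hsq, mul_pos ha2 (sub_pos.mpr hsq)]
  · have h1 : HasDerivAt (fun z : ℂ => (c:ℂ) - (a:ℂ) * z) (-(a:ℂ)) (η:ℂ) := by
      simpa using ((hasDerivAt_id (η:ℂ)).const_mul ((a:ℂ))).const_sub ((c:ℂ))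
    have h2 : HasDerivAt (fun z : ℂ => z + (c:ℂ)) 1 (η:ℂ) := (hasDerivAt_id _).add_const _
    have hηΩ : ε < ‖(η:ℂ) + (ε:ℂ)‖ := by
      rw [show (η:ℂ) + (ε:ℂ) = ((η + ε : ℝ) : ℂ) by push_cast; ring, Complex.norm_real,
        Real.norm_eq_abs, abs_of_pos hηε]
      linarith
    have hd0 : (η:ℂ) + (c:ℂ) ≠ 0 := hden _ hηΩ
    have hdf := (h1.div h2 hd0).deriv
    rw [hfdef]
    rw [show (fun z => ((c:ℂ) - (a:ℂ) * z) / (z + (c:ℂ))) =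
      ((fun z : ℂ => (c:ℂ) - (a:ℂ) * z) / fun z => z + (c:ℂ)) from rfl, hdf]
    have hca : (c:ℂ) - (a:ℂ) * (η:ℂ) = 0 := by
      rw [show (a:ℂ) * (η:ℂ) = ((a * η : ℝ):ℂ) by push_cast; ring, ← hcdef, sub_self]
    rw [hca]
    have hηc : (η:ℂ) + (c:ℂ) = ((η + c : ℝ) : ℂ) := by push_cast; ring
    have hηc0 : (0:ℝ) < η + c := by linarith
    rw [show (-(a:ℂ) * ((η:ℂ) + (c:ℂ)) - 0 * 1) = -(a:ℂ) * ((η:ℂ) + (c:ℂ)) by ring]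
    rw [norm_div, norm_mul, norm_neg, norm_pow, hηc, Complex.norm_real, Complex.norm_real,
      Real.norm_eq_abs, Real.norm_eq_abs, abs_of_pos ha0, abs_of_pos hηc0]
    rw [hcdef, hadef]
    have h2' : η * (η + 2*ε) ≠ 0 := ne_of_gt (by positivity)
    have h3 : η + ε / (η + ε) * η ≠ 0 := by positivity
    field_simp
    ring

end CaraProof

/-- For `G_ε = {|z + ε| > ε}` and `η > 0`:
`γ_{G_ε}(η;1) = 1/(η(2 + η/ε))`. -/

theorem statement19 (ε η : ℝ) (hε : 0 < ε) (hη : 0 < η) :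
    cara {z : ℂ | ε < ‖z + (ε : ℂ)‖} (η : ℂ) 1 = 1 / (η * (2 + η / ε)) := by
  obtain ⟨f₀, hf₀d, hf₀m, hf₀⟩ := extremal ε η hε hη
  have hval : (1:ℝ) / (η * (2 + η / ε)) = ε / (η * (η + 2*ε)) := by
    rw [div_eq_div_iff (by positivity) (by positivity)]
    field_simp
    ring
  rw [hval]
  unfold cara
  apply le_antisymm
  · apply csSup_le
    · exact ⟨ε / (η * (η + 2*ε)), f₀, hf₀d, hf₀m, by rw [fderiv_apply_one_eq_deriv]; exact hf₀.symm⟩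
    · rintro r ⟨f, hfd, hfm, rfl⟩
      rw [fderiv_apply_one_eq_deriv]
      exact upper ε η hε hη hfd hfm
  · apply le_csSup
    · refine ⟨ε / (η * (η + 2*ε)), ?_⟩
      rintro r ⟨f, hfd, hfm, rfl⟩
      rw [fderiv_apply_one_eq_deriv]
      exact upper ε η hε hη hfd hfm
    · exact ⟨f₀, hf₀d, hf₀m, by rw [fderiv_apply_one_eq_deriv]; exact hf₀.symm⟩
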